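/- Let N be a 5-dimensional nil evolution algebra over a field F of characteristic ≠ 2 which is associative and indecomposable. Then N admits a natural basis (v_1, …, v_5) such that one of the following holds: (a) there exist nonzero α, β, γ ∈ F with v_1·v_1 = v_5, v_2·v_2 = α·v_5, v_3·v_3 = β·v_5, v_4·v_4 = γ·v_5, v_5·v_5 = 0 (the algebra N_{5,8}(α,β,γ)); or (b) there exist nonzero α, β ∈ F with v_1·v_1 = v_4, v_2·v_2 = α·v_4 + β·v_5, v_3·v_3 = v_5, v_4·v_4 = 0, v_5·v_5 = 0 (the algebra N_{5,9}(α,β)). -/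

import Mathlib

/-- Principal powers: `ppow m a k = a^(k+1)`. -/
def ppow {F A : Type*} [Field F] [AddCommGroup A] [Module F A]
    (m : A →ₗ[F] A →ₗ[F] A) (a : A) : ℕ → A
  | 0 => a
  | k + 1 => m (ppow m a k) a

/-!
Write `S` for the set of indices with `e i * e i ≠ 0`. Associativity gives
`(e i * e i) * e j = e i * (e i * e j) = 0` for `i ≠ j`, and nilpotency of `e i` kills the
`e i`-coordinate of `e i * e i`; so every square lies in the span of the `e j` with `j ∉ S`, and
`A² * A = 0`. By indecomposability `A = span (e '' S) + A²`: a null `e k` outside this sum would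
split off as a one-dimensional ideal. Hence `5 ≤ 2 |S|`, and `|S| ≤ 4`. If `|S| = 4`, then `A²`
is a line and `e '' S` together with one square is a basis of type `N_{5,8}`. If `|S| = 3`, then
`A²` is a plane holding the three squares, no two of them proportional (else the algebra splits
into ideals of dimensions 3 and 2), which gives a basis of type `N_{5,9}`.
-/

open Module Submodule Finset

section EvolutionAlgebra

variable {F A ι : Type*} [Field F] [AddCommGroup A] [Module F A] {m : A →ₗ[F] A →ₗ[F] A}

def IsDecomposable (m : A →ₗ[F] A →ₗ[F] A) : Prop :=
  ∃ I J : Submodule F A,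
    (∀ x ∈ I, ∀ y : A, m x y ∈ I) ∧ (∀ x ∈ J, ∀ y : A, m x y ∈ J) ∧
      I ≠ ⊥ ∧ J ≠ ⊥ ∧ IsCompl I J

def IsNaturalBasis (m : A →ₗ[F] A →ₗ[F] A) (e : Basis ι F A) : Prop :=
  ∀ i j, i ≠ j → m (e i) (e j) = 0

lemma mul_mem_span_of_forall_mem {s : Set A} (h : ∀ g ∈ s, ∀ y, m g y ∈ span F s) :
    ∀ x ∈ span F s, ∀ y, m x y ∈ span F s := by
  intro x hx y
  induction hx using span_induction with
  | mem g hg => exact h g hg y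
  | zero => simp
  | add a b _ _ ha hb => rw [map_add, LinearMap.add_apply]; exact add_mem ha hb
  | smul t a _ ha => rw [map_smul, LinearMap.smul_apply]; exact smul_mem _ t ha

lemma isCompl_of_sup_eq_top_of_finrank_add_le [FiniteDimensional F A] {I J : Submodule F A}
    (hsup : I ⊔ J = ⊤) (hdim : finrank F I + finrank F J ≤ finrank F A) : IsCompl I J := by
  refine ⟨?_, codisjoint_iff.mpr hsup⟩
  have h := finrank_sup_add_finrank_inf_eq I J
  rw [hsup, finrank_top] at h
  rw [disjoint_iff, ← finrank_eq_zero]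
  omega

lemma isDecomposable_of_annihilating_of_dual [FiniteDimensional F A] (hA : 1 < finrank F A)
    {z : A} (hz : ∀ y, m z y = 0) {f : Dual F A} (hfz : f z ≠ 0) (hf : ∀ x y, f (m x y) = 0) :
    IsDecomposable m := by
  have hf0 : f ≠ 0 := fun h => hfz (by simp [h])
  have hz0 : span F {z} ≠ ⊥ := by
    rw [Ne, span_singleton_eq_bot]; rintro rfl; exact hfz (map_zero f)
  have hdisj : Disjoint (LinearMap.ker f) (span F {z}) := by
    rw [disjoint_iff_inf_le]
    rintro x ⟨hxf, hxz⟩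
    obtain ⟨t, rfl⟩ := mem_span_singleton.mp hxz
    rw [SetLike.mem_coe, LinearMap.mem_ker, map_smul, smul_eq_mul, mul_eq_zero] at hxf
    simp [hxf.resolve_right hfz]
  refine ⟨LinearMap.ker f, span F {z}, fun x _ y => hf x y, ?_, ?_, hz0,
    Dual.isCompl_ker_of_disjoint_of_ne_bot hf0 hdisj hz0⟩
  · intro x hx y
    obtain ⟨t, rfl⟩ := mem_span_singleton.mp hx
    simp [hz]
  · have := Dual.finrank_ker_add_one_of_ne_zero hf0
    rw [Ne, ← finrank_eq_zero]
    omega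

lemma span_range_eq_of_linearIndependent [FiniteDimensional F A] [Fintype ι] {u : ι → A}
    (hu : LinearIndependent F u) {W : Submodule F A} (huW : ∀ i, u i ∈ W)
    (hW : finrank F W ≤ Fintype.card ι) : span F (Set.range u) = W :=
  eq_of_le_of_finrank_le (span_le.mpr (Set.range_subset_iff.mpr huW))
    (by rwa [finrank_span_eq_card hu])

namespace IsNaturalBasis

variable [Fintype ι] {e : Basis ι F A}

lemma mul_basis_left (hnat : IsNaturalBasis m e) (i : ι) (y : A) :
    m (e i) y = e.repr y i • m (e i) (e i) := by
  conv_lhs => rw [← e.sum_repr y]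
  rw [map_sum, sum_eq_single i (fun j _ hj => by rw [map_smul, hnat i j hj.symm, smul_zero])
    (by simp), map_smul]

lemma mul_basis_right (hnat : IsNaturalBasis m e) (x : A) (j : ι) :
    m x (e j) = e.repr x j • m (e j) (e j) := by
  conv_lhs => rw [← e.sum_repr x]
  rw [map_sum, LinearMap.sum_apply, sum_eq_single j
    (fun i _ hi => by rw [map_smul, LinearMap.smul_apply, hnat i j hi, smul_zero]) (by simp),
    map_smul, LinearMap.smul_apply]

lemma mul_eq_sum (hnat : IsNaturalBasis m e) (x y : A) :
    m x y = ∑ i, (e.repr x i * e.repr y i) • m (e i) (e i) := by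
  conv_lhs => rw [← e.sum_repr x]
  rw [map_sum, LinearMap.sum_apply]
  refine sum_congr rfl fun i _ => ?_
  rw [map_smul, LinearMap.smul_apply, hnat.mul_basis_left i y, smul_smul]

lemma ppow_succ (hnat : IsNaturalBasis m e) (i : ι) (k : ℕ) :
    ppow m (e i) (k + 1) = e.repr (m (e i) (e i)) i ^ k • m (e i) (e i) := by
  induction k with
  | zero => simp [ppow]
  | succ k ih =>
    rw [ppow, ih, map_smul, LinearMap.smul_apply, hnat.mul_basis_right (m (e i) (e i)) i,
      smul_smul, pow_succ]

lemma mul_mul_self_eq_zero (hnat : IsNaturalBasis m e)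
    (hassoc : ∀ x y z : A, m (m x y) z = m x (m y z)) (hnil : ∀ i, ∃ k, ppow m (e i) k = 0)
    (x : A) (i : ι) : m x (m (e i) (e i)) = 0 := by
  have hbasis : ∀ j, m (e j) (m (e i) (e i)) = 0 := by
    intro j
    obtain rfl | hji := eq_or_ne j i
    · obtain ⟨_ | k, hk⟩ := hnil j
      · exact absurd hk (e.ne_zero j)
      rw [hnat.ppow_succ, smul_eq_zero] at hk
      rw [hnat.mul_basis_left]
      rcases hk with hc | hsq
      · rw [eq_zero_of_pow_eq_zero hc, zero_smul]
      · rw [hsq, smul_zero]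
    · rw [← hassoc, hnat j i hji, map_zero, LinearMap.zero_apply]
  rw [← e.sum_repr x, map_sum, LinearMap.sum_apply]
  exact sum_eq_zero fun j _ => by rw [map_smul, LinearMap.smul_apply, hbasis, smul_zero]

lemma repr_mul_self_eq_zero (hnat : IsNaturalBasis m e)
    (hR : ∀ x i, m x (m (e i) (e i)) = 0) {i j : ι} (hj : m (e j) (e j) ≠ 0) :
    e.repr (m (e i) (e i)) j = 0 :=
  (smul_eq_zero.mp (by rw [← hnat.mul_basis_left]; exact hR _ _)).resolve_right hj

lemma mul_self_mul_eq_zero (hnat : IsNaturalBasis m e) (hR : ∀ x i, m x (m (e i) (e i)) = 0)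
    (i : ι) (y : A) : m (m (e i) (e i)) y = 0 := by
  rw [hnat.mul_eq_sum]
  exact sum_eq_zero fun j _ => by
    rw [mul_comm, ← smul_smul, ← hnat.mul_basis_left, hR, smul_zero]

lemma mul_mem_of_mul_self_mem (hnat : IsNaturalBasis m e) {W : Submodule F A} {i : ι}
    (hi : m (e i) (e i) ∈ W) (y : A) : m (e i) y ∈ W := by
  rw [hnat.mul_basis_left]
  exact smul_mem _ _ hi

lemma exists_mul_self_eq_zero [Nonempty ι] (hnat : IsNaturalBasis m e)
    (hR : ∀ x i, m x (m (e i) (e i)) = 0) : ∃ j, m (e j) (e j) = 0 := by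
  by_contra! h
  obtain ⟨i⟩ := ‹Nonempty ι›
  refine h i (e.repr.injective (Finsupp.ext fun j => ?_))
  simpa using hnat.repr_mul_self_eq_zero hR (h j)

lemma finrank_span_mul_self_le [DecidableEq A] (hnat : IsNaturalBasis m e)
    (hR : ∀ x i, m x (m (e i) (e i)) = 0) :
    finrank F (span F (Set.range fun i => m (e i) (e i))) ≤ #{j | m (e j) (e j) = 0} := by
  have := e.finiteDimensional_of_finite
  set N : Finset ι := {j | m (e j) (e j) = 0}
  have hle : span F (Set.range fun i => m (e i) (e i)) ≤ span F (N.image e : Set A) := by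
    refine span_le.mpr ?_
    rintro _ ⟨i, rfl⟩
    simp only [SetLike.mem_coe]
    rw [← e.sum_repr (m (e i) (e i))]
    refine sum_mem fun j _ => ?_
    by_cases hj : m (e j) (e j) = 0
    · exact smul_mem _ _ (subset_span (mem_image_of_mem _ (mem_filter.mpr ⟨mem_univ j, hj⟩)))
    · rw [hnat.repr_mul_self_eq_zero hR hj, zero_smul]
      exact zero_mem _
  calc finrank F (span F (Set.range fun i => m (e i) (e i)))
      ≤ finrank F (span F (N.image e : Set A)) := finrank_mono hle
    _ ≤ #(N.image e) := finrank_span_finset_le_card _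
    _ ≤ #N := card_image_le

lemma eq_top_of_basis_mem_of_mul_self_mem (hnat : IsNaturalBasis m e)
    (hindec : ¬ IsDecomposable m) (hA : 1 < finrank F A) {W : Submodule F A}
    (he : ∀ i, m (e i) (e i) ≠ 0 → e i ∈ W) (hsq : ∀ i, m (e i) (e i) ∈ W) :
    W = ⊤ := by
  have := e.finiteDimensional_of_finite
  by_contra hW
  obtain ⟨f, hf0, hWf⟩ := W.exists_le_ker_of_lt_top (lt_top_iff_ne_top.mpr hW)
  obtain ⟨k, hk⟩ : ∃ k, f (e k) ≠ 0 := by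
    by_contra! h
    exact hf0 (e.ext fun k => by simp [h k])
  have hsqk : m (e k) (e k) = 0 := by
    by_contra h
    exact hk (hWf (he k h))
  refine hindec (isDecomposable_of_annihilating_of_dual hA (fun y => ?_) hk fun x y => ?_)
  · rw [hnat.mul_basis_left, hsqk, smul_zero]
  · rw [hnat.mul_eq_sum, map_sum]
    exact sum_eq_zero fun i _ => by rw [map_smul, LinearMap.mem_ker.mp (hWf (hsq i)), smul_zero]

lemma finrank_le_two_mul_card [DecidableEq A] (hnat : IsNaturalBasis m e)
    (hindec : ¬ IsDecomposable m) (hA : 1 < finrank F A) :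
    finrank F A ≤ 2 * #{i | m (e i) (e i) ≠ 0} := by
  set T : Finset ι := {i | m (e i) (e i) ≠ 0}
  set B : Finset A := T.image e ∪ T.image fun i => m (e i) (e i)
  have hT : ∀ i, m (e i) (e i) ≠ 0 → i ∈ T := fun i hi =>
    mem_filter.mpr ⟨mem_univ i, hi⟩
  have htop : span F (B : Set A) = ⊤ := by
    refine hnat.eq_top_of_basis_mem_of_mul_self_mem hindec hA
      (fun i hi => subset_span (mem_union_left _ (mem_image_of_mem _ (hT i hi)))) fun i => ?_
    by_cases hi : m (e i) (e i) = 0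
    · rw [hi]
      exact zero_mem _
    · exact subset_span (mem_union_right _ (mem_image_of_mem _ (hT i hi)))
  calc finrank F A = finrank F (span F (B : Set A)) := by rw [htop, finrank_top]
    _ ≤ #B := finrank_span_finset_le_card B
    _ ≤ #T + #T := (card_union_le _ _).trans (add_le_add card_image_le card_image_le)
    _ = 2 * #T := (two_mul _).symm

end IsNaturalBasis

-- The paper's `N_{5,8}(α, β, γ)` and `N_{5,9}(α, β)`, with `v 0, …, v 4` for its `v₁, …, v₅`.
def MulTableN58 (m : A →ₗ[F] A →ₗ[F] A) (v : Basis (Fin 5) F A) : Prop :=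
  ∃ α β γ : F, α ≠ 0 ∧ β ≠ 0 ∧ γ ≠ 0 ∧
    m (v 0) (v 0) = v 4 ∧
    m (v 1) (v 1) = α • v 4 ∧
    m (v 2) (v 2) = β • v 4 ∧
    m (v 3) (v 3) = γ • v 4 ∧
    m (v 4) (v 4) = 0

def MulTableN59 (m : A →ₗ[F] A →ₗ[F] A) (v : Basis (Fin 5) F A) : Prop :=
  ∃ α β : F, α ≠ 0 ∧ β ≠ 0 ∧
    m (v 0) (v 0) = v 3 ∧
    m (v 1) (v 1) = α • v 3 + β • v 4 ∧
    m (v 2) (v 2) = v 4 ∧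
    m (v 3) (v 3) = 0 ∧
    m (v 4) (v 4) = 0

namespace IsNaturalBasis

variable {e : Basis (Fin 5) F A}

/-- Were `e y * e y` a multiple of `e x * e x`, the spans of `{e x, e y, e x * e x}` and of
`{e z, e z * e z}` would be complementary ideals. -/
lemma linearIndependent_mul_self_pair (hnat : IsNaturalBasis m e)
    (hR : ∀ x i, m x (m (e i) (e i)) = 0) (hindec : ¬ IsDecomposable m) {x y z : Fin 5}
    (hS : ∀ i, m (e i) (e i) ≠ 0 → i = x ∨ i = y ∨ i = z) (hx : m (e x) (e x) ≠ 0) :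
    LinearIndependent F ![m (e x) (e x), m (e y) (e y)] := by
  classical
  have := e.finiteDimensional_of_finite
  have hA : finrank F A = 5 := by simp [finrank_eq_card_basis e]
  rw [LinearIndependent.pair_iff' hx]
  intro t ht
  have hL := hnat.mul_self_mul_eq_zero hR
  set I := span F (({e x, e y, m (e x) (e x)} : Finset A) : Set A)
  set J := span F (({e z, m (e z) (e z)} : Finset A) : Set A)
  have hxI : m (e x) (e x) ∈ I := subset_span (by simp)
  have hzJ : m (e z) (e z) ∈ J := subset_span (by simp)
  have hI : ∀ u ∈ I, ∀ w, m u w ∈ I := by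
    refine mul_mem_span_of_forall_mem ?_
    intro g hg w
    simp only [coe_insert, coe_singleton, Set.mem_insert_iff, Set.mem_singleton_iff] at hg
    rcases hg with rfl | rfl | rfl
    · exact hnat.mul_mem_of_mul_self_mem hxI w
    · exact hnat.mul_mem_of_mul_self_mem (ht ▸ smul_mem _ _ hxI) w
    · exact hL _ w ▸ zero_mem _
  have hJ : ∀ u ∈ J, ∀ w, m u w ∈ J := by
    refine mul_mem_span_of_forall_mem ?_
    intro g hg w
    simp only [coe_insert, coe_singleton, Set.mem_insert_iff, Set.mem_singleton_iff] at hg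
    rcases hg with rfl | rfl
    · exact hnat.mul_mem_of_mul_self_mem hzJ w
    · exact hL _ w ▸ zero_mem _
  have hsup : I ⊔ J = ⊤ := by
    refine hnat.eq_top_of_basis_mem_of_mul_self_mem hindec (by omega) (fun i hi => ?_) fun i => ?_
    · rcases hS i hi with rfl | rfl | rfl
      · exact mem_sup_left (subset_span (by simp))
      · exact mem_sup_left (subset_span (by simp))
      · exact mem_sup_right (subset_span (by simp))
    · by_cases hi : m (e i) (e i) = 0
      · rw [hi]
        exact zero_mem _
      rcases hS i hi with rfl | rfl | rfl
      · exact mem_sup_left hxI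
      · exact mem_sup_left (ht ▸ smul_mem _ _ hxI)
      · exact mem_sup_right hzJ
  have hdim : finrank F I + finrank F J ≤ finrank F A := by
    have hI3 : finrank F I ≤ 3 := (finrank_span_finset_le_card _).trans card_le_three
    have hJ2 : finrank F J ≤ 2 := (finrank_span_finset_le_card _).trans card_le_two
    omega
  refine hindec ⟨I, J, hI, hJ, ?_, ?_, isCompl_of_sup_eq_top_of_finrank_add_le hsup hdim⟩
  · exact (Submodule.ne_bot_iff _).mpr ⟨e x, subset_span (by simp), e.ne_zero x⟩
  · exact (Submodule.ne_bot_iff _).mpr ⟨e z, subset_span (by simp), e.ne_zero z⟩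

lemma exists_smul_mul_self_eq (hnat : IsNaturalBasis m e)
    (hR : ∀ x i, m x (m (e i) (e i)) = 0) {a j₀ : Fin 5}
    (hj₀ : ∀ i, m (e i) (e i) = 0 ↔ i = j₀) (ha : m (e a) (e a) ≠ 0) (i : Fin 5) :
    ∃ t : F, t • m (e a) (e a) = m (e i) (e i) := by
  classical
  have := e.finiteDimensional_of_finite
  have hnull : #{j | m (e j) (e j) = 0} = 1 := card_eq_one.mpr ⟨j₀, by ext j; simp [hj₀]⟩
  have hline : span F {m (e a) (e a)} = span F (Set.range fun i => m (e i) (e i)) :=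
    eq_of_le_of_finrank_le (span_le.mpr (Set.singleton_subset_iff.mpr (subset_span ⟨a, rfl⟩)))
      (by rw [finrank_span_singleton ha]; exact (hnat.finrank_span_mul_self_le hR).trans hnull.le)
  exact mem_span_singleton.mp (hline ▸ subset_span ⟨i, rfl⟩)

lemma exists_basis_mulTableN58 (hnat : IsNaturalBasis m e)
    (hR : ∀ x i, m x (m (e i) (e i)) = 0) (hindec : ¬ IsDecomposable m) {j₀ : Fin 5}
    (hj₀ : ∀ i, m (e i) (e i) = 0 ↔ i = j₀) :
    ∃ v : Basis (Fin 5) F A, IsNaturalBasis m v ∧ MulTableN58 m v := by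
  have hA : finrank F A = 5 := by simp [finrank_eq_card_basis e]
  have hne : ∀ k : Fin 5, k ≠ 0 → m (e (j₀ + k)) (e (j₀ + k)) ≠ 0 := fun k hk h =>
    hk (by simpa using (hj₀ _).mp h)
  choose t ht using hnat.exists_smul_mul_self_eq hR hj₀ (hne 1 (by decide))
  have ht0 : ∀ k : Fin 5, k ≠ 0 → t (j₀ + k) ≠ 0 := fun k hk h =>
    hne k hk (by rw [← ht, h, zero_smul])
  set u : Fin 5 → A :=
    ![e (j₀ + 1), e (j₀ + 2), e (j₀ + 3), e (j₀ + 4), m (e (j₀ + 1)) (e (j₀ + 1))]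
  have hspan : span F (Set.range u) = ⊤ := by
    refine hnat.eq_top_of_basis_mem_of_mul_self_mem hindec (by omega) (fun i hi => ?_) fun i => ?_
    · obtain ⟨k, rfl⟩ : ∃ k, i = j₀ + k := ⟨i - j₀, (add_sub_cancel j₀ i).symm⟩
      have hk : k ≠ 0 := by
        rintro rfl
        exact hi ((hj₀ _).mpr (add_zero j₀))
      fin_cases k
      · exact absurd rfl hk
      exacts [subset_span ⟨0, rfl⟩, subset_span ⟨1, rfl⟩, subset_span ⟨2, rfl⟩,
        subset_span ⟨3, rfl⟩]
    · rw [← ht i]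
      exact smul_mem _ _ (subset_span ⟨4, rfl⟩)
  let v := basisOfTopLeSpanOfCardEqFinrank u hspan.ge (by simp [hA])
  have hv : ⇑v = u := coe_basisOfTopLeSpanOfCardEqFinrank _ _ _
  have hL := hnat.mul_self_mul_eq_zero hR
  refine ⟨v, fun i j hij => ?_, t (j₀ + 2), t (j₀ + 3), t (j₀ + 4), ht0 2 (by decide),
    ht0 3 (by decide), ht0 4 (by decide), ?_, ?_, ?_, ?_, ?_⟩
  · rw [hv]
    fin_cases i <;> fin_cases j
    all_goals first
      | exact absurd rfl hij
      | exact hL _ _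
      | exact hR _ _
      | exact hnat _ _ ((add_right_injective j₀).ne (by decide))
  all_goals simp [hv, u, hL, ht]

lemma exists_mul_self_eq_smul_add_smul (hnat : IsNaturalBasis m e)
    (hR : ∀ x i, m x (m (e i) (e i)) = 0) (hindec : ¬ IsDecomposable m) {a b c : Fin 5}
    (hab : a ≠ b) (hac : a ≠ c) (hbc : b ≠ c)
    (hS : ∀ i, m (e i) (e i) ≠ 0 ↔ i = a ∨ i = b ∨ i = c) :
    ∃ α β : F, α ≠ 0 ∧ β ≠ 0 ∧
      m (e b) (e b) = α • m (e a) (e a) + β • m (e c) (e c) := by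
  classical
  have := e.finiteDimensional_of_finite
  have hsa : m (e a) (e a) ≠ 0 := (hS a).mpr (by simp)
  have hsc : m (e c) (e c) ≠ 0 := (hS c).mpr (by simp)
  have hpair {x y : Fin 5} (z : Fin 5)
      (hxyz : ∀ i, i = a ∨ i = b ∨ i = c → i = x ∨ i = y ∨ i = z)
      (hx : m (e x) (e x) ≠ 0) : LinearIndependent F ![m (e x) (e x), m (e y) (e y)] :=
    hnat.linearIndependent_mul_self_pair hR hindec (fun i hi => hxyz i ((hS i).mp hi)) hx
  have hac' := hpair (x := a) (y := c) b (by tauto) hsa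
  have hcb := hpair (x := c) (y := b) a (by tauto) hsc
  have hab' := hpair (x := a) (y := b) c (by tauto) hsa
  have hnull : #{j | m (e j) (e j) = 0} ≤ 2 := by
    have h := card_filter_add_card_filter_not (s := univ) (fun j => m (e j) (e j) = 0)
    have h3 : #{j | ¬ m (e j) (e j) = 0} = 3 :=
      card_eq_three.mpr ⟨a, b, c, hab, hac, hbc, by ext i; simpa using hS i⟩
    simp only [card_univ, Fintype.card_fin] at h
    omega
  have hplane := span_range_eq_of_linearIndependent hac'
    (W := span F (Set.range fun i => m (e i) (e i)))
    (fun i => by fin_cases i; exacts [subset_span ⟨a, rfl⟩, subset_span ⟨c, rfl⟩])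
    (by simpa using (hnat.finrank_span_mul_self_le hR).trans hnull)
  obtain ⟨k, hk⟩ := (mem_span_range_iff_exists_fun F).mp (hplane ▸ subset_span ⟨b, rfl⟩ :
    m (e b) (e b) ∈ span F (Set.range ![m (e a) (e a), m (e c) (e c)]))
  simp only [Fin.sum_univ_two, Matrix.cons_val_zero, Matrix.cons_val_one] at hk
  refine ⟨k 0, k 1, fun h0 => ?_, fun h1 => ?_, hk.symm⟩
  · exact (LinearIndependent.pair_iff' hsc).mp hcb (k 1) (by simpa [h0] using hk)
  · exact (LinearIndependent.pair_iff' hsa).mp hab' (k 0) (by simpa [h1] using hk)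

lemma exists_basis_mulTableN59 (hnat : IsNaturalBasis m e)
    (hR : ∀ x i, m x (m (e i) (e i)) = 0) (hindec : ¬ IsDecomposable m) {a b c : Fin 5}
    (hab : a ≠ b) (hac : a ≠ c) (hbc : b ≠ c)
    (hS : ∀ i, m (e i) (e i) ≠ 0 ↔ i = a ∨ i = b ∨ i = c) :
    ∃ v : Basis (Fin 5) F A, IsNaturalBasis m v ∧ MulTableN59 m v := by
  have hA : finrank F A = 5 := by simp [finrank_eq_card_basis e]
  obtain ⟨α, β, hα, hβ, hb⟩ :=
    hnat.exists_mul_self_eq_smul_add_smul hR hindec hab hac hbc hS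
  set u : Fin 5 → A := ![e a, e b, e c, m (e a) (e a), m (e c) (e c)]
  have hspan : span F (Set.range u) = ⊤ := by
    refine hnat.eq_top_of_basis_mem_of_mul_self_mem hindec (by omega) (fun i hi => ?_) fun i => ?_
    · rcases (hS i).mp hi with rfl | rfl | rfl
      exacts [subset_span ⟨0, rfl⟩, subset_span ⟨1, rfl⟩, subset_span ⟨2, rfl⟩]
    · by_cases hi : m (e i) (e i) = 0
      · rw [hi]
        exact zero_mem _
      rcases (hS i).mp hi with rfl | rfl | rfl
      · exact subset_span ⟨3, rfl⟩
      · rw [hb]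
        exact add_mem (smul_mem _ _ (subset_span ⟨3, rfl⟩))
          (smul_mem _ _ (subset_span ⟨4, rfl⟩))
      · exact subset_span ⟨4, rfl⟩
  let v := basisOfTopLeSpanOfCardEqFinrank u hspan.ge (by simp [hA])
  have hv : ⇑v = u := coe_basisOfTopLeSpanOfCardEqFinrank _ _ _
  have hL := hnat.mul_self_mul_eq_zero hR
  refine ⟨v, fun i j hij => ?_, α, β, hα, hβ, ?_, ?_, ?_, ?_, ?_⟩
  · rw [hv]
    fin_cases i <;> fin_cases j
    all_goals first
      | exact absurd rfl hij
      | exact hL _ _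
      | exact hR _ _
      | exact hnat _ _ ‹_›
      | exact hnat _ _ (Ne.symm ‹_›)
  all_goals simp [hv, u, hL, hb]

end IsNaturalBasis

end EvolutionAlgebra

theorem nil_assoc_indecomposable_dim5_classification_general
    (F : Type*) [Field F]
    (A : Type*) [AddCommGroup A] [Module F A]
    (m : A →ₗ[F] A →ₗ[F] A)
    (e : Module.Basis (Fin 5) F A)
    (hnat : ∀ i j : Fin 5, i ≠ j → m (e i) (e j) = 0)
    (hnil : ∀ a : A, ∃ k : ℕ, ppow m a k = 0)
    (hassoc : ∀ x y z : A, m (m x y) z = m x (m y z))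
    (hindec : ¬ ∃ I J : Submodule F A,
      (∀ x ∈ I, ∀ y : A, m x y ∈ I) ∧ (∀ x ∈ J, ∀ y : A, m x y ∈ J) ∧
      I ≠ ⊥ ∧ J ≠ ⊥ ∧ IsCompl I J) :
    ∃ v : Module.Basis (Fin 5) F A,
      (∀ i j : Fin 5, i ≠ j → m (v i) (v j) = 0) ∧
      ((∃ α β γ : F, α ≠ 0 ∧ β ≠ 0 ∧ γ ≠ 0 ∧
          m (v 0) (v 0) = v 4 ∧
          m (v 1) (v 1) = α • v 4 ∧
          m (v 2) (v 2) = β • v 4 ∧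
          m (v 3) (v 3) = γ • v 4 ∧
          m (v 4) (v 4) = 0) ∨
       (∃ α β : F, α ≠ 0 ∧ β ≠ 0 ∧
          m (v 0) (v 0) = v 3 ∧
          m (v 1) (v 1) = α • v 3 + β • v 4 ∧
          m (v 2) (v 2) = v 4 ∧
          m (v 3) (v 3) = 0 ∧
          m (v 4) (v 4) = 0)) := by
  classical
  have hR := IsNaturalBasis.mul_mul_self_eq_zero hnat hassoc fun i => hnil (e i)
  have hA : finrank F A = 5 := by simp [finrank_eq_card_basis e]
  have hrank := IsNaturalBasis.finrank_le_two_mul_card hnat hindec (by omega)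
  set T : Finset (Fin 5) := {i | m (e i) (e i) ≠ 0}
  have hT4 : #T < 5 := by
    obtain ⟨j, hj⟩ := IsNaturalBasis.exists_mul_self_eq_zero hnat hR
    simpa using card_lt_univ_of_notMem (s := T) (x := j) (by simp [T, hj])
  obtain h3 | h4 : #T = 3 ∨ #T = 4 := by omega
  · obtain ⟨a, b, c, hab, hac, hbc, habc⟩ := card_eq_three.mp h3
    obtain ⟨v, hv, hN⟩ := IsNaturalBasis.exists_basis_mulTableN59 hnat hR hindec
      hab hac hbc fun i => by simpa [T] using Finset.ext_iff.mp habc i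
    exact ⟨v, hv, Or.inr hN⟩
  · obtain ⟨j₀, hj₀⟩ := card_eq_one.mp (by rw [card_compl, h4]; rfl : #Tᶜ = 1)
    obtain ⟨v, hv, hN⟩ := IsNaturalBasis.exists_basis_mulTableN58 hnat hR hindec
      fun i => by simpa [T] using Finset.ext_iff.mp hj₀ i
    exact ⟨v, hv, Or.inl hN⟩

/-- a 5-dimensional nil, associative, indecomposable evolution algebra over
a field of characteristic ≠ 2 is isomorphic to `N_{5,8}(α,β,γ)` or `N_{5,9}(α,β)`. -/
theorem nil_assoc_indecomposable_dim5_classification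
    (F : Type*) [Field F] (h2 : (2 : F) ≠ 0)
    (A : Type*) [AddCommGroup A] [Module F A]
    (m : A →ₗ[F] A →ₗ[F] A) (hcomm : ∀ x y : A, m x y = m y x)
    (e : Module.Basis (Fin 5) F A)
    (hnat : ∀ i j : Fin 5, i ≠ j → m (e i) (e j) = 0)
    (hnil : ∀ a : A, ∃ k : ℕ, ppow m a k = 0)
    (hassoc : ∀ x y z : A, m (m x y) z = m x (m y z))
    (hindec : ¬ ∃ I J : Submodule F A,
      (∀ x ∈ I, ∀ y : A, m x y ∈ I) ∧ (∀ x ∈ J, ∀ y : A, m x y ∈ J) ∧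
      I ≠ ⊥ ∧ J ≠ ⊥ ∧ IsCompl I J) :
    ∃ v : Module.Basis (Fin 5) F A,
      (∀ i j : Fin 5, i ≠ j → m (v i) (v j) = 0) ∧
      ((∃ α β γ : F, α ≠ 0 ∧ β ≠ 0 ∧ γ ≠ 0 ∧
          m (v 0) (v 0) = v 4 ∧
          m (v 1) (v 1) = α • v 4 ∧
          m (v 2) (v 2) = β • v 4 ∧
          m (v 3) (v 3) = γ • v 4 ∧
          m (v 4) (v 4) = 0) ∨
       (∃ α β : F, α ≠ 0 ∧ β ≠ 0 ∧
          m (v 0) (v 0) = v 3 ∧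
          m (v 1) (v 1) = α • v 3 + β • v 4 ∧
          m (v 2) (v 2) = v 4 ∧
          m (v 3) (v 3) = 0 ∧
          m (v 4) (v 4) = 0)) :=
  nil_assoc_indecomposable_dim5_classification_general F A m e hnat hnil hassoc hindec
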